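/- arXiv:1905.03379 — 5 statements merged into one kernel-verified Lean document; each statement's English description precedes it below -/
import Mathlib

section
/- Let G be a connected graph and S ⊆ V(G) a nonempty set of vertices. Let Ĝ be the graph obtained from G by identifying S into a single new vertex û (edges inside S are deleted, and û is adjacent to exactly the vertices of V(G)\S that had a neighbor in S). Then the minimum size of a connected vertex cover of Ĝ is at most the minimum size of a connected vertex cover of G. -/
/-- `X` is a vertex cover of `G`: every edge has at least one endpoint in `X`. -/
def IsVertexCover {V : Type*} (G : SimpleGraph V) (X : Set V) : Prop :=
  ∀ ⦃u v : V⦄, G.Adj u v → u ∈ X ∨ v ∈ X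

/-- `X` is a connected vertex cover of `G`. -/
def IsConnectedVertexCover {V : Type*} (G : SimpleGraph V) (X : Set V) : Prop :=
  IsVertexCover G X ∧ (G.induce X).Connected

/-- The graph obtained from `G` by identifying the set `S` into a single new vertex
(represented by `none`); edges inside `S` are discarded, and the new vertex is
adjacent to exactly the vertices outside `S` that had a neighbor in `S`. -/
def identifyGraph {V : Type*} (G : SimpleGraph V) (S : Set V) :
    SimpleGraph (Option {v : V // v ∉ S}) :=
  SimpleGraph.fromRel (fun x y =>
    match x, y with
    | some a, some b => G.Adj a.1 b.1
    | none, some a => ∃ s ∈ S, G.Adj s a.1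
    | _, _ => False)

/-- Identifying a set of vertices does not increase the minimum size of a
connected vertex cover. -/
theorem stmt0 {V : Type} [Fintype V] (G : SimpleGraph V) (S : Set V)
    (hG : G.Connected) (hS : S.Nonempty) :
    ∀ X : Set V, IsConnectedVertexCover G X →
      ∃ Y : Set (Option {v : V // v ∉ S}),
        IsConnectedVertexCover (identifyGraph G S) Y ∧ Y.ncard ≤ X.ncard := by
  classical
  intro X hX
  set f : V → Option {v : V // v ∉ S} := fun v => if h : v ∈ S then none else some ⟨v, h⟩
    with hf
  refine ⟨f '' X, ⟨?_, ?_⟩, Set.ncard_image_le X.toFinite⟩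
  · -- vertex cover
    intro u v huv
    rw [identifyGraph, SimpleGraph.fromRel_adj] at huv
    obtain ⟨hne, h⟩ := huv
    match u, v with
    | none, none => exact absurd rfl hne
    | some a, some b =>
      have hadj : G.Adj a.1 b.1 := by
        rcases h with h | h
        · exact h
        · exact h.symm
      rcases hX.1 hadj with hx | hx
      · exact Or.inl ⟨a.1, hx, by simp [hf, a.2]⟩
      · exact Or.inr ⟨b.1, hx, by simp [hf, b.2]⟩
    | none, some a =>
      have : ∃ s ∈ S, G.Adj s a.1 := by
        rcases h with h | h
        · exact h
        · exact absurd h (by simp)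
      obtain ⟨s, hs, hadj⟩ := this
      rcases hX.1 hadj with hx | hx
      · exact Or.inl ⟨s, hx, by simp [hf, hs]⟩
      · exact Or.inr ⟨a.1, hx, by simp [hf, a.2]⟩
    | some a, none =>
      have : ∃ s ∈ S, G.Adj s a.1 := by
        rcases h with h | h
        · exact absurd h (by simp)
        · exact h
      obtain ⟨s, hs, hadj⟩ := this
      rcases hX.1 hadj with hx | hx
      · exact Or.inr ⟨s, hx, by simp [hf, hs]⟩
      · exact Or.inl ⟨a.1, hx, by simp [hf, a.2]⟩
  · -- connectivity
    have hmem : ∀ a : X, f a.1 ∈ f '' X := fun a => ⟨a.1, a.2, rfl⟩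
    have step : ∀ (a c : X), (G.induce X).Adj a c →
        ((identifyGraph G S).induce (f '' X)).Reachable ⟨f a.1, hmem a⟩ ⟨f c.1, hmem c⟩ := by
      intro a c hac
      have hadj : G.Adj a.1 c.1 := hac
      by_cases ha : a.1 ∈ S <;> by_cases hc : c.1 ∈ S
      · have heq : (⟨f a.1, hmem a⟩ : ↥(f '' X)) = ⟨f c.1, hmem c⟩ :=
          Subtype.ext (by simp [hf, ha, hc])
        rw [heq]
      · apply SimpleGraph.Adj.reachable
        show (identifyGraph G S).Adj (f a.1) (f c.1)
        rw [identifyGraph, SimpleGraph.fromRel_adj]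
        simp only [hf, ha, hc, dif_pos, dif_neg]
        exact ⟨by simp, Or.inl ⟨a.1, ha, hadj⟩⟩
      · apply SimpleGraph.Adj.reachable
        show (identifyGraph G S).Adj (f a.1) (f c.1)
        rw [identifyGraph, SimpleGraph.fromRel_adj]
        simp only [hf, ha, hc, dif_pos, dif_neg]
        exact ⟨by simp, Or.inr ⟨c.1, hc, hadj.symm⟩⟩
      · apply SimpleGraph.Adj.reachable
        show (identifyGraph G S).Adj (f a.1) (f c.1)
        rw [identifyGraph, SimpleGraph.fromRel_adj]
        simp only [hf, ha, hc, dif_neg]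
        refine ⟨by simpa using hadj.ne, Or.inl hadj⟩
    have key : ∀ (a b : X), (G.induce X).Reachable a b →
        ((identifyGraph G S).induce (f '' X)).Reachable ⟨f a.1, hmem a⟩ ⟨f b.1, hmem b⟩ := by
      intro a b h
      obtain ⟨w⟩ := h
      induction w with
      | nil => exact SimpleGraph.Reachable.refl _
      | cons h p ih => exact (step _ _ h).trans ih
    rw [SimpleGraph.connected_iff]
    constructor
    · rintro ⟨y1, hy1⟩ ⟨y2, hy2⟩
      obtain ⟨x1, hx1, rfl⟩ := hy1
      obtain ⟨x2, hx2, rfl⟩ := hy2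
      exact key ⟨x1, hx1⟩ ⟨x2, hx2⟩ (hX.2.preconnected _ _)
    · obtain ⟨⟨x, hx⟩⟩ := hX.2.nonempty
      exact ⟨⟨f x, ⟨x, hx, rfl⟩⟩⟩
end

section
/- Let G be a connected graph and X a vertex cover of G such that G[X] has at most m ≥ 1 connected components. Then there exists a connected vertex cover X' of G with X ⊆ X' and |X'| ≤ |X| + m − 1. -/
namespace SimpleGraph

variable {V : Type*} {G : SimpleGraph V} {X : Set V}

lemma exists_adj_adj_not_reachable_of_walk (hX : G.IsVertexCover X) {x b : V} (hb : b ∈ X)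
    (p : G.Walk x b) {a : V} (ha : a ∈ X) (hax : a = x ∨ G.Adj a x)
    (hab : ¬ (G.induce X).Reachable ⟨a, ha⟩ ⟨b, hb⟩) :
    ∃ (u v w : V) (hu : u ∈ X) (hv : v ∈ X), G.Adj u w ∧ G.Adj w v ∧
      ¬ (G.induce X).Reachable ⟨u, hu⟩ ⟨v, hv⟩ := by
  induction p generalizing a with
  | nil =>
    refine hab.elim ?_
    rcases hax with rfl | hadj
    · rfl
    · exact (show (G.induce X).Adj ⟨a, ha⟩ ⟨_, hb⟩ from hadj).reachable
  | @cons x y b hxy q ih =>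
    rcases hax with rfl | hax
    · exact ih hb ha (.inr hxy) hab
    by_cases hx : x ∈ X
    · have hax : (G.induce X).Adj ⟨a, ha⟩ ⟨x, hx⟩ := hax
      exact ih hb hx (.inr hxy) fun h => hab (hax.reachable.trans h)
    have hy : y ∈ X := (hX hxy).resolve_left hx
    by_cases hay : (G.induce X).Reachable ⟨a, ha⟩ ⟨y, hy⟩
    · exact ih hb hy (.inl rfl) fun h => hab (hay.trans h)
    · exact ⟨a, y, x, ha, hy, hax, hxy, hay⟩

lemma exists_adj_adj_not_reachable (hG : G.Preconnected) (hX : G.IsVertexCover X)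
    (hXG : ¬ (G.induce X).Preconnected) :
    ∃ (u v w : V) (hu : u ∈ X) (hv : v ∈ X), G.Adj u w ∧ G.Adj w v ∧
      ¬ (G.induce X).Reachable ⟨u, hu⟩ ⟨v, hv⟩ := by
  simp only [Preconnected, not_forall] at hXG
  obtain ⟨⟨a, ha⟩, ⟨b, hb⟩, hab⟩ := hXG
  exact exists_adj_adj_not_reachable_of_walk hX hb (hG a b).some ha (.inl rfl) hab

lemma card_connectedComponent_induce_insert_lt [Finite V] {u v w : V}
    (hu : u ∈ X) (hv : v ∈ X)
    (huw : G.Adj u w) (hwv : G.Adj w v) (huv : ¬ (G.induce X).Reachable ⟨u, hu⟩ ⟨v, hv⟩) :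
    Nat.card (G.induce (insert w X)).ConnectedComponent <
      Nat.card (G.induce X).ConnectedComponent := by
  have hXY : X ⊆ insert w X := Set.subset_insert w X
  let f (C : (G.induce X).ConnectedComponent) : (G.induce (insert w X)).ConnectedComponent :=
    C.map (G.induceHomOfLE hXY).toHom
  have hwu : (G.induce (insert w X)).Adj ⟨w, Set.mem_insert w X⟩ ⟨u, hXY hu⟩ := huw.symm
  have hwv : (G.induce (insert w X)).Adj ⟨w, Set.mem_insert w X⟩ ⟨v, hXY hv⟩ := hwv
  have hf : Function.Surjective f := by
    rintro ⟨⟨y, rfl | hy⟩⟩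
    · exact ⟨G.induce X |>.connectedComponentMk ⟨u, hu⟩,
        ConnectedComponent.sound hwu.reachable.symm⟩
    · exact ⟨G.induce X |>.connectedComponentMk ⟨y, hy⟩, rfl⟩
  have hf' : ¬ Function.Injective f := fun hinj => huv <| ConnectedComponent.exact <|
    @hinj (G.induce X |>.connectedComponentMk ⟨u, hu⟩)
      (G.induce X |>.connectedComponentMk ⟨v, hv⟩)
      (ConnectedComponent.sound (hwu.reachable.symm.trans hwv.reachable))
  refine (Nat.card_le_card_of_surjective f hf).lt_of_ne fun hcard => hf' ?_
  exact ((Nat.bijective_iff_surjective_and_card f).mpr ⟨hf, hcard.symm⟩).injective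

end SimpleGraph

theorem stmt7_general {V : Type} [Fintype V] (G : SimpleGraph V) (hG : G.Connected)
    (X : Set V) (hX : X.Nonempty) (hvc : IsVertexCover G X)
    (m : ℕ)
    (hcomp : Nat.card (G.induce X).ConnectedComponent ≤ m) :
    ∃ X' : Set V, X ⊆ X' ∧ IsConnectedVertexCover G X' ∧
      X'.ncard ≤ X.ncard + m - 1 := by
  induction m generalizing X with
  | zero =>
    have : Nonempty X := hX.to_subtype
    exact absurd hcomp (Nat.card_pos (α := (G.induce X).ConnectedComponent)).not_ge
  | succ m ih =>
    by_cases hXG : (G.induce X).Preconnected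
    · exact ⟨X, subset_rfl, ⟨hvc, (G.induce X).connected_iff.mpr ⟨hXG, hX.to_subtype⟩⟩,
        by omega⟩
    obtain ⟨u, v, w, hu, hv, huw, hwv, huv⟩ :=
      SimpleGraph.exists_adj_adj_not_reachable hG.preconnected hvc hXG
    have hlt := SimpleGraph.card_connectedComponent_induce_insert_lt hu hv huw hwv huv
    -- `IsVertexCover G X` unfolds to Mathlib's `G.IsVertexCover X`.
    obtain ⟨X', hX', hcvc, hcard⟩ := ih (insert w X) (Set.insert_nonempty w X)
      (SimpleGraph.IsVertexCover.subset (Set.subset_insert w X) hvc) (by omega)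
    have := Set.ncard_insert_le w X
    exact ⟨X', (Set.subset_insert w X).trans hX', hcvc, by omega⟩

/-- A vertex cover whose induced subgraph has at most `m ≥ 1` connected components
can be completed to a connected vertex cover by adding at most `m - 1` vertices. -/
theorem stmt7 {V : Type} [Fintype V] (G : SimpleGraph V) (hG : G.Connected)
    (X : Set V) (hX : X.Nonempty) (hvc : IsVertexCover G X)
    (m : ℕ) (hm : 1 ≤ m)
    (hcomp : Nat.card (G.induce X).ConnectedComponent ≤ m) :
    ∃ X' : Set V, X ⊆ X' ∧ IsConnectedVertexCover G X' ∧
      X'.ncard ≤ X.ncard + m - 1 :=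
  stmt7_general G hG X hX hvc m hcomp
end

section
/- Let G be a connected graph with at least one edge, and let u be a vertex such that G − u has at least two connected components C₁ and C₂, each of which contains a vertex adjacent to u in G. Then every connected vertex cover of G contains u. -/
/-- If `G - u` has two distinct connected components each containing a neighbor of `u`,
then every connected vertex cover of `G` contains `u`. -/
theorem stmt13 {V : Type} [Fintype V] (G : SimpleGraph V) (hG : G.Connected)
    (hedge : ∃ x y : V, G.Adj x y)
    (u v₁ v₂ : V) (h1 : v₁ ≠ u) (h2 : v₂ ≠ u)
    (ha1 : G.Adj u v₁) (ha2 : G.Adj u v₂)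
    (hcomp : (G.induce {v : V | v ≠ u}).connectedComponentMk ⟨v₁, h1⟩ ≠
             (G.induce {v : V | v ≠ u}).connectedComponentMk ⟨v₂, h2⟩) :
    ∀ X : Set V, IsConnectedVertexCover G X → u ∈ X := by
  intro X ⟨hcov, hconn⟩
  by_contra hu
  have hv1 : v₁ ∈ X := by
    rcases hcov ha1 with h | h
    · exact absurd h hu
    · exact h
  have hv2 : v₂ ∈ X := by
    rcases hcov ha2 with h | h
    · exact absurd h hu
    · exact h
  have hreach : (G.induce X).Reachable ⟨v₁, hv1⟩ ⟨v₂, hv2⟩ := hconn ⟨v₁, hv1⟩ ⟨v₂, hv2⟩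
  have hne : ∀ x : V, x ∈ X → x ≠ u := fun x hx hxu => hu (hxu ▸ hx)
  let f : (G.induce X) →g (G.induce {v : V | v ≠ u}) :=
    { toFun := fun x => ⟨x.1, hne x.1 x.2⟩
      map_rel' := fun h => h }
  have := (hreach.map f)
  exact hcomp (SimpleGraph.ConnectedComponent.sound this)
end

section
/- Let G be a connected graph and let A be a connected vertex cover of G containing a cut vertex u. Let C be a connected component of G − u. Then A ∩ (V(C) ∪ {u}) is a connected vertex cover of the induced subgraph G[V(C) ∪ {u}]. -/
/-- Restricting a connected vertex cover `A ∋ u` of `G` (with `u` a cut vertex) to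
`V(C) ∪ {u}` for a component `C` of `G - u` yields a connected vertex cover of the
induced subgraph `G[V(C) ∪ {u}]`. -/
theorem stmt14 {V : Type} [Fintype V] (G : SimpleGraph V) (hG : G.Connected) (u : V)
    (hcut : ¬ (G.induce {v : V | v ≠ u}).Connected)
    (A : Set V) (hA : IsConnectedVertexCover G A) (huA : u ∈ A)
    (c : (G.induce {v : V | v ≠ u}).ConnectedComponent)
    (S : Set V)
    (hSdef : S =
      {v : V | ∃ h : v ≠ u,
        (G.induce {v : V | v ≠ u}).connectedComponentMk ⟨v, h⟩ = c} ∪ {u}) :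
    (∀ ⦃x y : V⦄, G.Adj x y → x ∈ S → y ∈ S → x ∈ A ∩ S ∨ y ∈ A ∩ S) ∧
    (G.induce (A ∩ S)).Connected := by
  obtain ⟨hcov, hconn⟩ := hA
  constructor
  · intro x y hxy hxS hyS
    rcases hcov hxy with h | h
    · exact Or.inl ⟨h, hxS⟩
    · exact Or.inr ⟨h, hyS⟩
  · have huS : u ∈ S := by rw [hSdef]; exact Or.inr rfl
    set uu : ↥(A ∩ S) := ⟨u, huA, huS⟩ with huu
    have key : ∀ (a e : ↥A) (w : (G.induce A).Walk a e), (e : V) = u → ∀ (ha : (a : V) ∈ S),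
        (G.induce (A ∩ S)).Reachable uu ⟨a, a.2, ha⟩ := by
      intro a e w
      induction w with
      | nil =>
        rename_i v
        intro heu ha
        have : (⟨(v : V), v.2, ha⟩ : ↥(A ∩ S)) = uu := Subtype.ext heu
        rw [this]
      | @cons a b _ hadj p ih =>
        intro heu ha
        by_cases hau : (a : V) = u
        · have : (⟨(a : V), a.2, ha⟩ : ↥(A ∩ S)) = uu := Subtype.ext hau
          rw [this]
        · have ha' := ha
          rw [hSdef] at ha'
          rcases ha' with ⟨hne, hc⟩ | h
          · by_cases hbu : (b : V) = u
            · have hadj' : (G.induce (A ∩ S)).Adj uu ⟨a, a.2, ha⟩ := by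
                show G.Adj u a
                rw [← hbu]
                exact (show G.Adj (a : V) (b : V) from hadj).symm
              exact hadj'.reachable
            · have hb : (b : V) ∈ S := by
                rw [hSdef]
                left
                refine ⟨hbu, ?_⟩
                rw [← hc]
                exact SimpleGraph.ConnectedComponent.sound
                  (SimpleGraph.Adj.reachable
                    (show (G.induce {v : V | v ≠ u}).Adj ⟨b, hbu⟩ ⟨a, hne⟩ from
                      (show G.Adj (a : V) (b : V) from hadj).symm))
              exact (ih heu hb).trans
                ((show (G.induce (A ∩ S)).Adj ⟨b, b.2, hb⟩ ⟨a, a.2, ha⟩ from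
                  (show G.Adj (a : V) (b : V) from hadj).symm).reachable)
          · exact absurd h hau
    rw [SimpleGraph.connected_iff]
    refine ⟨?_, ⟨uu⟩⟩
    intro x y
    obtain ⟨wx⟩ := hconn.preconnected ⟨x, x.2.1⟩ ⟨u, huA⟩
    obtain ⟨wy⟩ := hconn.preconnected ⟨y, y.2.1⟩ ⟨u, huA⟩
    have hx := key ⟨x, x.2.1⟩ ⟨u, huA⟩ wx rfl x.2.2
    have hy := key ⟨y, y.2.1⟩ ⟨u, huA⟩ wy rfl y.2.2
    exact hx.symm.trans hy
end

section
/- Let G be a graph, S ⊆ V(G), and suppose X* is a connected vertex cover of the graph Ĝ obtained from G by identifying S into a single vertex û. Then X = (X* \ {û}) ∪ S is a vertex cover of G, and the induced subgraph G[X] has at most |S| + 1 connected components. -/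
/-- If `X*` is a connected vertex cover of the graph `Ĝ` obtained by identifying `S`
into a vertex `û`, then `(X* \ {û}) ∪ S` is a vertex cover of `G` inducing a subgraph
with at most `|S| + 1` connected components. -/
theorem stmt15 {V : Type} [Fintype V] (G : SimpleGraph V) (hG : G.Connected)
    (S : Set V)
    (Xstar : Set (Option {v : V // v ∉ S}))
    (hXstar : Xstar.Nonempty)
    (hcvc : IsConnectedVertexCover (identifyGraph G S) Xstar)
    (X : Set V)
    (hX : X = {v : V | ∃ h : v ∉ S, some ⟨v, h⟩ ∈ Xstar} ∪ S) :
    IsVertexCover G X ∧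
      Nat.card (G.induce X).ConnectedComponent ≤ S.ncard + 1 := by
  subst hX
  obtain ⟨hcov, hconn⟩ := hcvc
  set X : Set V := {v : V | ∃ h : v ∉ S, some ⟨v, h⟩ ∈ Xstar} ∪ S with hXdef
  have hmemX : ∀ (x : {v : V // v ∉ S}), some x ∈ Xstar → x.1 ∈ X := by
    intro x hx
    exact Or.inl ⟨x.2, by simpa using hx⟩
  have hSX : ∀ {s : V}, s ∈ S → s ∈ X := fun hs => Or.inr hs
  have hvc : IsVertexCover G X := by
    intro u v huv
    by_cases hu : u ∈ S
    · exact Or.inl (hSX hu)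
    by_cases hv : v ∈ S
    · exact Or.inr (hSX hv)
    have hadj : (identifyGraph G S).Adj (some ⟨u, hu⟩) (some ⟨v, hv⟩) := by
      refine ⟨by simp [huv.ne], Or.inl huv⟩
    rcases hcov hadj with h | h
    · exact Or.inl (Or.inl ⟨hu, h⟩)
    · exact Or.inr (Or.inl ⟨hv, h⟩)
  refine ⟨hvc, ?_⟩
  -- key walk lemma
  have key : ∀ {a b : ↥Xstar} (p : ((identifyGraph G S).induce Xstar).Walk a b)
      (x : {v : V // v ∉ S}) (hxX : x.1 ∈ X) (hx : a.1 = some x),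
      (∃ (y : {v : V // v ∉ S}) (hyX : y.1 ∈ X), b.1 = some y ∧
        (G.induce X).Reachable ⟨x.1, hxX⟩ ⟨y.1, hyX⟩) ∨
      (∃ s, ∃ hs : s ∈ S, (G.induce X).Reachable ⟨x.1, hxX⟩ ⟨s, hSX hs⟩) := by
    intro a b p
    induction p with
    | nil =>
      intro x hxX hx
      exact Or.inl ⟨x, hxX, hx, SimpleGraph.Reachable.refl _⟩
    | @cons a c b h q ih =>
      intro x hxX hx
      have hadj : (identifyGraph G S).Adj a.1 c.1 := h
      rcases hzc : c.1 with _ | z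
      · -- c = none : the previous vertex is adjacent to some s ∈ S
        rw [hx, hzc] at hadj
        obtain ⟨-, hrel⟩ := hadj
        have : ∃ s ∈ S, G.Adj s x.1 := by
          rcases hrel with h' | h'
          · exact absurd h' (by simp [identifyGraph])
          · exact h'
        obtain ⟨s, hs, hsx⟩ := this
        have hadjH : (G.induce X).Adj ⟨x.1, hxX⟩ ⟨s, hSX hs⟩ := by
          exact hsx.symm
        exact Or.inr ⟨s, hs, hadjH.reachable⟩
      · -- c = some z
        rw [hx, hzc] at hadj
        obtain ⟨-, hrel⟩ := hadj
        have hxz : G.Adj x.1 z.1 := by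
          rcases hrel with h' | h'
          · exact h'
          · exact h'.symm
        have hzXs : some z ∈ Xstar := by rw [← hzc]; exact c.2
        have hzX : z.1 ∈ X := hmemX z hzXs
        have hadjH : (G.induce X).Adj ⟨x.1, hxX⟩ ⟨z.1, hzX⟩ := hxz
        rcases ih z hzX hzc with ⟨y, hyX, hby, hr⟩ | ⟨s, hs, hr⟩
        · exact Or.inl ⟨y, hyX, hby, hadjH.reachable.trans hr⟩
        · exact Or.inr ⟨s, hs, hadjH.reachable.trans hr⟩
  -- at most one component contains no vertex of S
  have uniq : ∀ c1 c2 : (G.induce X).ConnectedComponent,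
      (¬ ∃ s : ↥S, (G.induce X).connectedComponentMk ⟨s.1, hSX s.2⟩ = c1) →
      (¬ ∃ s : ↥S, (G.induce X).connectedComponentMk ⟨s.1, hSX s.2⟩ = c2) →
      c1 = c2 := by
    intro c1 c2 h1 h2
    obtain ⟨⟨v1, hv1X⟩, rfl⟩ := c1.exists_rep
    obtain ⟨⟨v2, hv2X⟩, rfl⟩ := c2.exists_rep
    have hv1S : v1 ∉ S := fun hs => h1 ⟨⟨v1, hs⟩, rfl⟩
    have hv2S : v2 ∉ S := fun hs => h2 ⟨⟨v2, hs⟩, rfl⟩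
    have h1' : some (⟨v1, hv1S⟩ : {v : V // v ∉ S}) ∈ Xstar := by
      rcases hv1X with ⟨h, hmem⟩ | hs
      · exact hmem
      · exact absurd hs hv1S
    have h2' : some (⟨v2, hv2S⟩ : {v : V // v ∉ S}) ∈ Xstar := by
      rcases hv2X with ⟨h, hmem⟩ | hs
      · exact hmem
      · exact absurd hs hv2S
    obtain ⟨p⟩ := hconn.preconnected ⟨some ⟨v1, hv1S⟩, h1'⟩ ⟨some ⟨v2, hv2S⟩, h2'⟩
    rcases key p ⟨v1, hv1S⟩ hv1X rfl with ⟨y, hyX, hby, hr⟩ | ⟨s, hs, hr⟩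
    · have : (⟨v2, hv2S⟩ : {v : V // v ∉ S}) = y := Option.some.inj hby
      subst this
      exact SimpleGraph.ConnectedComponent.sound hr
    · exact absurd ⟨⟨s, hs⟩, SimpleGraph.ConnectedComponent.sound hr.symm⟩ h1
  -- build an injection into Option ↥S
  classical
  let f : (G.induce X).ConnectedComponent → Option ↥S := fun c =>
    if h : ∃ s : ↥S, (G.induce X).connectedComponentMk ⟨s.1, hSX s.2⟩ = c
    then some h.choose else none
  have finj : Function.Injective f := by
    intro c1 c2 hf
    by_cases h1 : ∃ s : ↥S, (G.induce X).connectedComponentMk ⟨s.1, hSX s.2⟩ = c1 <;>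
      by_cases h2 : ∃ s : ↥S, (G.induce X).connectedComponentMk ⟨s.1, hSX s.2⟩ = c2
    · simp only [f, dif_pos h1, dif_pos h2, Option.some.injEq] at hf
      rw [← h1.choose_spec, ← h2.choose_spec, hf]
    · simp only [f] at hf
      rw [dif_pos h1, dif_neg h2] at hf
      exact (Option.some_ne_none _ hf).elim
    · simp only [f] at hf
      rw [dif_neg h1, dif_pos h2] at hf
      exact (Option.some_ne_none _ hf.symm).elim
    · exact uniq c1 c2 h1 h2
  have hfin : S.Finite := Set.toFinite S
  calc Nat.card (G.induce X).ConnectedComponent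
      ≤ Nat.card (Option ↥S) := Nat.card_le_card_of_injective f finj
    _ = S.ncard + 1 := by
        haveI := Fintype.ofFinite ↥S
        rw [Nat.card_eq_fintype_card, Fintype.card_option, ← Nat.card_eq_fintype_card,
          Nat.card_coe_set_eq]
end
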